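/- Let Σ be the language with one binary relation symbol < and constant symbols c_q for each rational number q, let Q* be the Σ-structure with universe ℚ, < interpreted as the natural order, and c_q interpreted as q, and let M' be a model of Th(Q*) in which each complete 1-type over ∅ has at most one realization. If λ is the cardinality of the set of non-isolated complete 1-types over ∅ realized in M', then |H(M')| = 2^λ. -/

import Mathlib

open FirstOrder FirstOrder.Language Set Cardinal

/-- Relation symbols: a single binary relation `<`. -/
inductive QRel : ℕ → Type
  | lt : QRel 2

/-- The language with one binary relation symbol `<` and a constant symbol `c_q`
for each rational number `q`. -/
def QLang : Language :=
  { Functions := fun n => match n with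
      | 0 => ℚ
      | _ + 1 => Empty
    Relations := QRel }

/-- The structure `Q*`: universe `ℚ`, `<` the natural order, `c_q` interpreted as `q`. -/
instance : QLang.Structure ℚ where
  funMap {n} f _ := match n, f with
    | 0, q => q
  RelMap {n} r v := match n, r with
    | 2, QRel.lt => v 0 < v 1

/-- The family of universes of elementary submodels. -/
def ESub (L : Language) (M : Type*) [L.Structure M] : Set (Set M) :=
  {N | ∃ S : L.ElementarySubstructure M, (S : Set M) = N}

/-- The complete 1-type over `∅` of an element `a`. -/
def tp1 (L : Language) {M : Type*} [L.Structure M] (a : M) : Set (L.Formula (Fin 1)) :=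
  {φ | φ.Realize (fun _ => a)}

/-- A set of 1-formulas is isolated (w.r.t. the complete theory of `M`) if some single
formula of it implies all its formulas. -/
def IsIsolated1 (L : Language) (M : Type*) [L.Structure M]
    (p : Set (L.Formula (Fin 1))) : Prop :=
  ∃ φ ∈ p, ∀ ψ ∈ p, ∀ x : M,
    Formula.Realize φ (fun _ => x) → Formula.Realize ψ (fun _ => x)

/-!
In a model `M` of `Th(Q*)`, which is a dense linear order without endpoints, a back-and-forth
argument shows that the truth of a formula at a tuple only depends on the order type of the tuple
over the finitely many constants the formula mentions. So two elements in the same cut of the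
constants have the same type; as types have at most one realization, the constants are dense in
`M`. Then every set containing the constants passes the Tarski–Vaught test, and the elementary
submodels are exactly the supersets of the set `C` of constants: there are `2 ^ |M \ C|` of them.
Finally `x = c_q` isolates the type of `c_q`, whereas a formula true of a non-constant `a` is also
true of a constant in the same cut as `a` over the constants of the formula, so the type of `a` is
not isolated. Hence `a ↦ tp(a)` is a bijection from `M \ C` onto the realized non-isolated types.
-/

section CmpPreserving

variable {α β : Type*} [LinearOrder α] [LinearOrder β]

def IsCmpPreserving (P : Set (α × β)) : Prop :=
  ∀ p ∈ P, ∀ q ∈ P, cmp p.1 q.1 = cmp p.2 q.2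

theorem isCmpPreserving_of_forall_fst_eq_snd {P : Set (α × α)} (h : ∀ p ∈ P, p.1 = p.2) :
    IsCmpPreserving P := fun p hp q hq => by rw [h p hp, h q hq]

namespace IsCmpPreserving

variable {P Q : Set (α × β)}

theorem mono (h : IsCmpPreserving P) (hQP : Q ⊆ P) : IsCmpPreserving Q :=
  fun p hp q hq => h p (hQP hp) q (hQP hq)

theorem preimage_swap (h : IsCmpPreserving P) : IsCmpPreserving (Prod.swap ⁻¹' P) :=
  fun _ hp _ hq => (h _ hp _ hq).symm

theorem insert (h : IsCmpPreserving P) {a : α} {b : β} (hab : ∀ p ∈ P, cmp p.1 a = cmp p.2 b) :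
    IsCmpPreserving (insert (a, b) P) := by
  rintro p (rfl | hp) q (rfl | hq)
  · simp only [cmp_self_eq_eq]
  · rw [← cmp_swap, hab q hq, cmp_swap]
  · exact hab p hp
  · exact h p hp q hq

theorem exists_mem_cmp_eq [NoMinOrder β] [NoMaxOrder β] {s : Set β}
    (hs : ∀ x y, x < y → ∃ c ∈ s, x < c ∧ c < y) (hsne : s.Nonempty)
    (h : IsCmpPreserving P) (hfin : P.Finite) (hPs : ∀ p ∈ P, p.2 ∈ s) (a : α) :
    ∃ b ∈ s, ∀ p ∈ P, cmp p.1 a = cmp p.2 b := by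
  have : Nonempty s := hsne.to_subtype
  have : DenselyOrdered s := ⟨fun x y hxy => by
    obtain ⟨c, hc, hxc, hcy⟩ := hs x y hxy
    exact ⟨⟨c, hc⟩, hxc, hcy⟩⟩
  have : NoMaxOrder s := ⟨fun x => by
    obtain ⟨y, hy⟩ := exists_gt (x : β)
    obtain ⟨c, hc, hxc, -⟩ := hs _ _ hy
    exact ⟨⟨c, hc⟩, hxc⟩⟩
  have : NoMinOrder s := ⟨fun x => by
    obtain ⟨y, hy⟩ := exists_lt (x : β)
    obtain ⟨c, hc, -, hcx⟩ := hs _ _ hy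
    exact ⟨⟨c, hc⟩, hcx⟩⟩
  let Q : Set (α × s) := Prod.map id Subtype.val ⁻¹' P
  have hQ : Q.Finite := hfin.preimage (Function.injective_id.prodMap Subtype.val_injective).injOn
  have hcmp (x y : s) : cmp x y = cmp (x : β) y := ((Subtype.strictMono_coe s).cmp_map_eq x y).symm
  obtain ⟨b, hb⟩ := Order.PartialIso.exists_across
    ⟨hQ.toFinset, fun p hp q hq => by
      simp only [Set.Finite.mem_toFinset] at hp hq
      rw [hcmp]
      exact h _ hp _ hq⟩ a
  refine ⟨b, b.2, fun p hp => ?_⟩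
  rw [hb (p.1, ⟨p.2, hPs p hp⟩) (by simpa [Q] using hp), hcmp]

end IsCmpPreserving

theorem le_and_le_of_cmp_ne {x y c : α} (hxy : x ≤ y) (h : cmp c x ≠ cmp c y) :
    x ≤ c ∧ c ≤ y := by
  refine ⟨not_lt.1 fun hcx => h ?_, not_lt.1 fun hyc => h ?_⟩
  · rw [(cmp_eq_lt_iff _ _).2 hcx, (cmp_eq_lt_iff _ _).2 (hcx.trans_le hxy)]
  · rw [(cmp_eq_gt_iff _ _).2 hyc, (cmp_eq_gt_iff _ _).2 (hxy.trans_lt hyc)]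

end CmpPreserving

theorem Cardinal.mk_Ici_set {α : Type*} (s : Set α) : #(Ici s) = 2 ^ #↥sᶜ := by
  rw [← mk_congr isCompl_compl.symm.IicOrderIsoIci.toEquiv]
  exact mk_powerset sᶜ

namespace FirstOrder.Language.Relations

variable {L : Language} (r : L.Relations 2)

protected def trichotomous : L.Sentence :=
  ∀' ∀' (∼(r.boundedFormula₂ (&0) &1) ⟹ ∼(r.boundedFormula₂ (&1) &0) ⟹ Term.bdEqual (&0) &1)

protected def dense : L.Sentence :=
  ∀' ∀' (r.boundedFormula₂ (&0) &1 ⟹ ∃' (r.boundedFormula₂ (&0) &2 ⊓ r.boundedFormula₂ (&2) &1))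

protected def unboundedAbove : L.Sentence :=
  ∀' ∃' r.boundedFormula₂ (&0) &1

protected def unboundedBelow : L.Sentence :=
  ∀' ∃' r.boundedFormula₂ (&1) &0

variable {r} {M : Type*} [L.Structure M]

theorem realize_trichotomous : M ⊨ r.trichotomous ↔
    ∀ x y : M, ¬Structure.RelMap r ![x, y] → ¬Structure.RelMap r ![y, x] → x = y := by
  simp [Relations.trichotomous, Sentence.Realize, Formula.Realize, Fin.snoc]

theorem realize_dense :
    M ⊨ r.dense ↔ ∀ x y : M, Structure.RelMap r ![x, y] →
      ∃ z, Structure.RelMap r ![x, z] ∧ Structure.RelMap r ![z, y] := by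
  simp [Relations.dense, Sentence.Realize, Formula.Realize, Fin.snoc]

theorem realize_unboundedAbove :
    M ⊨ r.unboundedAbove ↔ ∀ x : M, ∃ y, Structure.RelMap r ![x, y] := by
  simp [Relations.unboundedAbove, Sentence.Realize, Formula.Realize, Fin.snoc]

theorem realize_unboundedBelow :
    M ⊨ r.unboundedBelow ↔ ∀ x : M, ∃ y, Structure.RelMap r ![y, x] := by
  simp [Relations.unboundedBelow, Sentence.Realize, Formula.Realize, Fin.snoc]

end FirstOrder.Language.Relations

namespace QLang

section Structure

variable {M : Type*} [QLang.Structure M]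

def const (q : ℚ) : M := Structure.funMap (L := QLang) (n := 0) q ![]

theorem realize_func_zero {β : Type*} (q : QLang.Functions 0) (ts : Fin 0 → QLang.Term β)
    (u : β → M) : (Term.func (L := QLang) (l := 0) q ts).realize u = const q := by
  rw [Term.realize_func]
  exact congrArg _ (Subsingleton.elim _ _)

theorem const_mem (S : QLang.Substructure M) (q : ℚ) : (const q : M) ∈ S :=
  S.fun_mem (n := 0) q _ finZeroElim

def ltRel (a b : M) : Prop := Structure.RelMap (L := QLang) QRel.lt ![a, b]

class LtCompatible (M : Type*) [QLang.Structure M] [LT M] : Prop where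
  relMap_lt : ∀ v : Fin 2 → M, Structure.RelMap (L := QLang) QRel.lt v ↔ v 0 < v 1

def eqConst (q : ℚ) : QLang.Formula (Fin 1) :=
  (Term.var 0).equal (Term.func (L := QLang) (l := 0) q ![])

theorem realize_eqConst {q : ℚ} {a : M} : (eqConst q).Realize (fun _ => a) ↔ a = const q := by
  rw [eqConst, Formula.realize_equal]
  exact iff_of_eq (congrArg (a = ·) (realize_func_zero (M := M) _ _ _))

theorem isIsolated1_tp1_const (q : ℚ) : IsIsolated1 QLang M (tp1 QLang (const q : M)) :=
  ⟨eqConst q, realize_eqConst.2 rfl, fun _ hψ _ hx => realize_eqConst.1 hx ▸ hψ⟩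

end Structure

section Model

variable (M : Type*) [QLang.Structure M] [M ⊨ QLang.completeTheory ℚ]

theorem realize_of_realize_rat {σ : QLang.Sentence} (h : ℚ ⊨ σ) : M ⊨ σ :=
  (realize_iff_of_model_completeTheory ℚ M σ).2 h

instance : IsStrictTotalOrder M ltRel where
  toIrrefl := Relations.realize_irreflexive.1 (realize_of_realize_rat M
    (Relations.realize_irreflexive.2 (inferInstanceAs (Std.Irrefl (· < · : ℚ → ℚ → Prop)))))
  toIsTrans := Relations.realize_transitive.1 (realize_of_realize_rat M
    (Relations.realize_transitive.2 (inferInstanceAs (IsTrans ℚ (· < ·)))))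
  toTrichotomous := ⟨Relations.realize_trichotomous.1 (realize_of_realize_rat M
    (Relations.realize_trichotomous.2 fun (x y : ℚ) (hxy : ¬x < y) (hyx : ¬y < x) =>
      le_antisymm (not_lt.1 hyx) (not_lt.1 hxy)))⟩

theorem exists_linearOrder_of_model :
    ∃ _ : LinearOrder M, LtCompatible M ∧ DenselyOrdered M ∧ NoMinOrder M ∧ NoMaxOrder M := by
  classical
  -- the strict order of `linearOrderOfSTO ltRel` is `ltRel` itself
  let _ := linearOrderOfSTO (ltRel (M := M))
  refine ⟨inferInstance, ⟨fun v => ?_⟩, ⟨?_⟩, ⟨?_⟩, ⟨?_⟩⟩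
  · exact iff_of_eq (congrArg _ (List.ofFn_inj.mp rfl : v = ![v 0, v 1]))
  · exact Relations.realize_dense.1 (realize_of_realize_rat M
      (Relations.realize_dense.2 fun _ _ => exists_between (α := ℚ)))
  · exact Relations.realize_unboundedBelow.1 (realize_of_realize_rat M
      (Relations.realize_unboundedBelow.2 (exists_lt (α := ℚ))))
  · exact Relations.realize_unboundedAbove.1 (realize_of_realize_rat M
      (Relations.realize_unboundedAbove.2 (exists_gt (α := ℚ))))

end Model

section PairSet

variable {M : Type*} [QLang.Structure M] {β : Type*} {G G' : Finset ℚ} {u u' : β → M}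

def constPairs (G : Finset ℚ) : Set (M × M) :=
  (fun q => (const q, const q)) '' G

def pairSet (G : Finset ℚ) (u u' : β → M) : Set (M × M) :=
  range (fun k => (u k, u' k)) ∪ constPairs G

theorem isCmpPreserving_constPairs [LinearOrder M] : IsCmpPreserving (constPairs (M := M) G) :=
  isCmpPreserving_of_forall_fst_eq_snd (by rintro _ ⟨q, -, rfl⟩; rfl)

theorem constPairs_finite : (constPairs (M := M) G).Finite :=
  G.finite_toSet.image _

theorem pairSet_mono (h : G ⊆ G') : pairSet G u u' ⊆ pairSet G' u u' :=
  union_subset_union_right _ (image_mono (Finset.coe_subset.2 h))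

theorem preimage_swap_pairSet : Prod.swap ⁻¹' pairSet G u u' = pairSet G u' u := by
  ext ⟨a, b⟩
  simp [pairSet, constPairs, and_comm]

theorem _root_.IsCmpPreserving.pairSet_comm [LinearOrder M]
    (h : IsCmpPreserving (pairSet G u u')) : IsCmpPreserving (pairSet G u' u) := by
  simpa only [preimage_swap_pairSet] using h.preimage_swap

theorem pairSet_finite [Finite β] : (pairSet G u u').Finite :=
  (finite_range _).union constPairs_finite

theorem pairSet_self_fst_eq_snd : ∀ p ∈ pairSet G u u, p.1 = p.2 := by
  rintro _ (⟨k, rfl⟩ | ⟨q, -, rfl⟩) <;> rfl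

theorem pairSet_snoc {α : Type*} {n : ℕ} (v w : α → M) (xs ys : Fin n → M) (a b : M) :
    pairSet G (Sum.elim v (Fin.snoc xs a)) (Sum.elim w (Fin.snoc ys b)) =
      insert (a, b) (pairSet G (Sum.elim v xs) (Sum.elim w ys)) := by
  ext p
  simp only [pairSet, mem_union, mem_range, mem_insert_iff, Sum.exists, Sum.elim_inl,
    Sum.elim_inr, Fin.exists_fin_succ', Fin.snoc_castSucc, Fin.snoc_last]
  tauto

theorem pairSet_fin_one (a b : M) :
    pairSet G (Sum.elim (fun _ : Fin 1 => a) (default : Fin 0 → M))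
      (Sum.elim (fun _ => b) default) = insert (a, b) (constPairs G) := by
  ext p
  simp [pairSet, Sum.exists, eq_comm]

theorem exists_mem_pairSet (t : QLang.Term β) :
    ∃ G : Finset ℚ, ∀ u u' : β → M, (t.realize u, t.realize u') ∈ pairSet G u u' :=
  match t with
  | .var k => ⟨∅, fun _ _ => Or.inl ⟨k, rfl⟩⟩
  | .func (l := 0) q ts => ⟨{q}, fun u u' => Or.inr ⟨q, Finset.mem_singleton_self q, by
      rw [realize_func_zero q ts u, realize_func_zero q ts u']⟩⟩
  | .func (l := _ + 1) f _ => Empty.elim f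

theorem exists_cmp_realize_eq [LinearOrder M] (t s : QLang.Term β) :
    ∃ G : Finset ℚ, ∀ u u' : β → M, IsCmpPreserving (pairSet G u u') →
      cmp (t.realize u) (s.realize u) = cmp (t.realize u') (s.realize u') := by
  obtain ⟨G₁, h₁⟩ := exists_mem_pairSet (M := M) t
  obtain ⟨G₂, h₂⟩ := exists_mem_pairSet (M := M) s
  exact ⟨G₁ ∪ G₂, fun u u' hP => hP _ (pairSet_mono Finset.subset_union_left (h₁ u u'))
    _ (pairSet_mono Finset.subset_union_right (h₂ u u'))⟩

end PairSet

section Invariance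

variable (M : Type*) [QLang.Structure M] [LinearOrder M]

def IsInvariantOver {α : Type*} {n : ℕ} (G : Finset ℚ) (φ : QLang.BoundedFormula α n) : Prop :=
  ∀ (v w : α → M) (xs ys : Fin n → M),
    IsCmpPreserving (pairSet G (Sum.elim v xs) (Sum.elim w ys)) →
      (φ.Realize v xs ↔ φ.Realize w ys)

variable {M} {α : Type*} {n : ℕ} {G G₁ G₂ : Finset ℚ}

namespace IsInvariantOver

theorem mono {φ : QLang.BoundedFormula α n} (h : IsInvariantOver M G φ) (hGG' : G ⊆ G₁) :
    IsInvariantOver M G₁ φ :=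
  fun v w xs ys hP => h v w xs ys (hP.mono (pairSet_mono hGG'))

theorem imp {φ ψ : QLang.BoundedFormula α n} (hφ : IsInvariantOver M G₁ φ)
    (hψ : IsInvariantOver M G₂ ψ) : IsInvariantOver M (G₁ ∪ G₂) (φ.imp ψ) := fun v w xs ys hP =>
  imp_congr (hφ.mono Finset.subset_union_left v w xs ys hP)
    (hψ.mono Finset.subset_union_right v w xs ys hP)

theorem all [Finite α] [DenselyOrdered M] [NoMinOrder M] [NoMaxOrder M]
    {φ : QLang.BoundedFormula α (n + 1)} (hφ : IsInvariantOver M G φ) :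
    IsInvariantOver M G φ.all := by
  have forth {v w : α → M} {xs ys : Fin n → M}
      (hP : IsCmpPreserving (pairSet G (Sum.elim w ys) (Sum.elim v xs)))
      (h : ∀ a, φ.Realize v (Fin.snoc xs a)) (b : M) : φ.Realize w (Fin.snoc ys b) := by
    obtain ⟨a, -, ha⟩ := hP.exists_mem_cmp_eq (s := univ)
      (fun x y hxy => (exists_between hxy).imp fun _ hc => ⟨mem_univ _, hc⟩) ⟨b, mem_univ _⟩
      pairSet_finite (fun _ _ => mem_univ _) b
    refine (hφ w v (Fin.snoc ys b) (Fin.snoc xs a) ?_).2 (h a)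
    rw [pairSet_snoc]
    exact hP.insert ha
  exact fun v w xs ys hP => ⟨forth hP.pairSet_comm, forth hP⟩

end IsInvariantOver

/-- This replaces quantifier elimination for the theory of `Q*`. -/
theorem exists_isInvariantOver [LtCompatible M] [DenselyOrdered M] [NoMinOrder M] [NoMaxOrder M]
    [Finite α] : ∀ {n : ℕ} (φ : QLang.BoundedFormula α n), ∃ G : Finset ℚ, IsInvariantOver M G φ
  | _, .falsum => ⟨∅, fun _ _ _ _ _ => Iff.rfl⟩
  | _, .equal t s => by
    obtain ⟨G, hG⟩ := exists_cmp_realize_eq (M := M) t s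
    refine ⟨G, fun v w xs ys hP => ?_⟩
    simp only [BoundedFormula.Realize, ← cmp_eq_eq_iff, hG _ _ hP]
  | _, .rel R ts => by
    cases R
    obtain ⟨G, hG⟩ := exists_cmp_realize_eq (M := M) (ts 0) (ts 1)
    have hlt (v : α → M) (xs : Fin _ → M) : (BoundedFormula.rel QRel.lt ts).Realize v xs ↔
        cmp ((ts 0).realize (Sum.elim v xs)) ((ts 1).realize (Sum.elim v xs)) = .lt :=
      (LtCompatible.relMap_lt _).trans (cmp_eq_lt_iff _ _).symm
    exact ⟨G, fun v w xs ys hP => by rw [hlt, hlt, hG _ _ hP]⟩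
  | _, .imp φ ψ =>
    let ⟨_, hφ⟩ := exists_isInvariantOver φ
    let ⟨_, hψ⟩ := exists_isInvariantOver ψ
    ⟨_, hφ.imp hψ⟩
  | _, .all φ => let ⟨_, hφ⟩ := exists_isInvariantOver φ; ⟨_, hφ.all⟩

theorem realize_iff_of_cmp_const_eq {φ : QLang.Formula (Fin 1)} (hφ : IsInvariantOver M G φ)
    {a b : M} (h : ∀ q ∈ G, cmp (const q) a = cmp (const q) b) :
    φ.Realize (fun _ => a) ↔ φ.Realize (fun _ => b) := by
  refine hφ _ _ default default ?_
  rw [pairSet_fin_one]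
  exact isCmpPreserving_constPairs.insert (by rintro _ ⟨q, hq, rfl⟩; exact h q hq)

end Invariance

section DenseConstants

variable {M : Type*} [QLang.Structure M] [LinearOrder M] [LtCompatible M]
  [DenselyOrdered M] [NoMinOrder M] [NoMaxOrder M]

theorem tp1_eq_of_cmp_const_eq {a b : M} (h : ∀ q, cmp (const q) a = cmp (const q) b) :
    tp1 QLang a = tp1 QLang b := by
  ext φ
  obtain ⟨G, hG⟩ := exists_isInvariantOver (M := M) φ
  exact realize_iff_of_cmp_const_eq hG fun q _ => h q

/-- Two elements strictly between `a` and `b` have distinct types, so some constant separates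
them. -/
theorem exists_const_between (huniq : ∀ a b : M, tp1 QLang a = tp1 QLang b → a = b) {a b : M}
    (hab : a < b) : ∃ q, a < const q ∧ const q < b := by
  obtain ⟨x, hax, hxb⟩ := exists_between hab
  obtain ⟨y, hxy, hyb⟩ := exists_between hxb
  obtain ⟨q, hq⟩ : ∃ q, cmp (const q) x ≠ cmp (const q) y := by
    by_contra! h
    exact hxy.ne (huniq x y (tp1_eq_of_cmp_const_eq h))
  obtain ⟨hxq, hqy⟩ := le_and_le_of_cmp_ne hxy.le hq
  exact ⟨q, hax.trans_le hxq, hqy.trans_lt hyb⟩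

variable (hC : ∀ a b : M, a < b → ∃ q, a < const q ∧ const q < b)
include hC

theorem isIsolated1_tp1_iff {a : M} : IsIsolated1 QLang M (tp1 QLang a) ↔ a ∈ range const := by
  refine ⟨fun ⟨φ, hφ, himp⟩ => ?_, fun ⟨q, hq⟩ => hq ▸ isIsolated1_tp1_const q⟩
  by_contra ha
  obtain ⟨G, hG⟩ := exists_isInvariantOver (M := M) φ
  obtain ⟨_, ⟨q, rfl⟩, hq⟩ := isCmpPreserving_constPairs.exists_mem_cmp_eq
    (fun x y hxy => let ⟨q, hq⟩ := hC x y hxy; ⟨_, mem_range_self q, hq⟩)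
    ⟨_, mem_range_self 0⟩ constPairs_finite (by rintro _ ⟨r, -, rfl⟩; exact mem_range_self r) a
  have hφq : φ.Realize fun _ => const q :=
    (realize_iff_of_cmp_const_eq hG fun r hr => hq _ ⟨r, hr, rfl⟩).1 hφ
  have hne : (eqConst q).not ∈ tp1 QLang a :=
    Formula.realize_not.2 fun h => ha ⟨q, (realize_eqConst.1 h).symm⟩
  exact Formula.realize_not.1 (himp _ hne _ hφq) (realize_eqConst.2 rfl)

theorem isElementary_of_dense_const (S : QLang.Substructure M) : S.IsElementary := by
  refine S.isElementary_of_exists fun n φ x a ha => ?_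
  obtain ⟨G, hG⟩ := exists_isInvariantOver (M := M) φ
  have hP := isCmpPreserving_of_forall_fst_eq_snd
    (pairSet_self_fst_eq_snd (G := G) (u := Sum.elim (default : Empty → M) (Subtype.val ∘ x)))
  obtain ⟨b, hbS, hb⟩ := hP.exists_mem_cmp_eq (s := S)
    (fun y z hyz => let ⟨q, hq⟩ := hC y z hyz; ⟨_, const_mem S q, hq⟩) ⟨_, const_mem S 0⟩
    pairSet_finite
    (by rintro _ (⟨⟨e⟩ | i, rfl⟩ | ⟨q, -, rfl⟩); exacts [e.elim, (x i).2, const_mem S q]) a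
  refine ⟨⟨b, hbS⟩, (hG _ _ _ _ ?_).1 ha⟩
  rw [pairSet_snoc]
  exact hP.insert hb

theorem eSub_eq : ESub QLang M = Ici (range const) := by
  ext N
  refine ⟨?_, fun hN => ?_⟩
  · rintro ⟨S, rfl⟩ _ ⟨q, rfl⟩
    exact const_mem S.toSubstructure q
  · let S : QLang.Substructure M :=
      { carrier := N
        fun_mem := fun {n} f => match n, f with
          | 0, q => fun x _ => (Subsingleton.elim x ![] : x = ![]) ▸ hN ⟨q, rfl⟩
          | _ + 1, f => Empty.elim f }
    exact ⟨⟨S, isElementary_of_dense_const hC S⟩, rfl⟩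

end DenseConstants

theorem mk_eSub_eq {M : Type*} [QLang.Structure M] [LinearOrder M] [LtCompatible M]
    [DenselyOrdered M] [NoMinOrder M] [NoMaxOrder M]
    (huniq : ∀ a b : M, tp1 QLang a = tp1 QLang b → a = b) :
    #(ESub QLang M) = 2 ^ lift #{p : Set (QLang.Formula (Fin 1)) //
      (∃ a : M, p = tp1 QLang a) ∧ ¬ IsIsolated1 QLang M p} := by
  have hC (a b : M) (h : a < b) := exists_const_between huniq h
  let e : ↥(range (const (M := M)))ᶜ ≃
      {p // (∃ a : M, p = tp1 QLang a) ∧ ¬ IsIsolated1 QLang M p} :=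
    Equiv.ofBijective (fun a => ⟨tp1 QLang (a : M), ⟨a, rfl⟩, (isIsolated1_tp1_iff hC).not.2 a.2⟩)
      ⟨fun a b h => Subtype.ext (huniq _ _ (congrArg Subtype.val h)), by
        rintro ⟨p, ⟨a, rfl⟩, ha⟩
        exact ⟨⟨a, (isIsolated1_tp1_iff hC).not.1 ha⟩, rfl⟩⟩
  rw [eSub_eq hC, mk_Ici_set, ← lift_mk_eq'.2 ⟨e⟩, lift_uzero]

end QLang

universe u

theorem stmt13 (M' : Type u) [QLang.Structure M']
    (hM' : M' ⊨ QLang.completeTheory ℚ)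
    (huniq : ∀ a b : M', tp1 QLang a = tp1 QLang b → a = b)
    (lam : Cardinal)
    (hlam : lam = Cardinal.mk
      {p : Set (QLang.Formula (Fin 1)) //
        (∃ a : M', p = tp1 QLang a) ∧ ¬ IsIsolated1 QLang M' p}) :
    Cardinal.mk (ESub QLang M') = 2 ^ Cardinal.lift.{u, 0} lam := by
  obtain ⟨_, _, _, _, _⟩ := QLang.exists_linearOrder_of_model M'
  rw [hlam]
  exact QLang.mk_eSub_eq huniq
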